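/- Let I ⊆ S be a homogeneous ideal, let F be a minimal free resolution of S/I equipped with a multiplicative structure (a homogeneous chain map F ⊗_S F → F lifting the identity of S/I, inducing the product on Tor^S_*(S/I, 𝕜)). Let a, b ∈ Tor^S_*(S/I, 𝕜) be homogeneous elements of homological degrees i₁ and i₂ respectively, such that a·b ≠ 0 and every product of two homogeneous elements of Tor^S_*(S/I, 𝕜) of total homological degree strictly less than i₁ + i₂ is zero. Then a·b lies in the image of ν^1_{i₁+i₂}(S/I) : Tor_{i₁+i₂}^S(S/I, S/m²) → Tor_{i₁+i₂}^S(S/I, S/m). -/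

import Mathlib

set_option maxHeartbeats 1000000
set_option synthInstance.maxHeartbeats 400000

open MvPolynomial

noncomputable section

namespace LinMaps


/-- The polynomial ring `S = 𝕜[x₁,…,xₙ]`. -/
abbrev PolyS (k : Type) [Field k] (n : ℕ) := MvPolynomial (Fin n) k

/-- The irrelevant maximal ideal `m = (x₁,…,xₙ)` of `S`. -/
def mIdl (k : Type) [Field k] (n : ℕ) : Ideal (PolyS k n) := Ideal.span (Set.range X)

/-- `polyHom t p` : the polynomial `p` is homogeneous of degree `t ∈ ℤ` in the standard
`ℤ`-grading of `S`. -/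
def polyHom (k : Type) [Field k] (n : ℕ) : ℤ → PolyS k n → Prop := fun t p =>
  if 0 ≤ t then p.IsHomogeneous t.toNat else p = 0

/-- `J` is a homogeneous ideal. -/
def IdealIsHomog {k : Type} [Field k] {n : ℕ} (J : Ideal (PolyS k n)) : Prop :=
  ∀ p ∈ J, ∀ t : ℕ, MvPolynomial.homogeneousComponent t p ∈ J

/-- Homogeneity of degree `t ∈ ℤ` in `R = S/J`. -/
def quotHom (k : Type) [Field k] (n : ℕ) (J : Ideal (PolyS k n)) :
    ℤ → (PolyS k n ⧸ J) → Prop :=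
  fun t r => ∃ p : PolyS k n, polyHom k n t p ∧ Ideal.Quotient.mk J p = r

/-- The irrelevant maximal ideal of `R = S/J`. -/
def mIdlQ (k : Type) [Field k] (n : ℕ) (J : Ideal (PolyS k n)) : Ideal (PolyS k n ⧸ J) :=
  (mIdl k n).map (Ideal.Quotient.mk J)

/-- Homogeneity for the fine `ℤⁿ`-multigrading on `S`: `p` is homogeneous of
multidegree `m : Fin n → ℤ`. -/
def mHom (k : Type) [Field k] (n : ℕ) : (Fin n → ℤ) → PolyS k n → Prop := fun m p =>
  ∀ d ∈ p.support, ∀ u, (d u : ℤ) = m u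

/-- A structure of graded module (with degrees in the abelian group `γ`) on an `A`-module `M`,
relative to a notion `hom : γ → A → Prop` of homogeneous elements of the ring `A`:
a family of additive subgroups forming an internal direct sum, such that homogeneous ring
elements shift degrees. -/
structure GrModStr {A : Type} [CommRing A] {γ : Type} [AddCommGroup γ] [DecidableEq γ]
    (hom : γ → A → Prop) (M : Type) [AddCommGroup M] [Module A M] where
  gr : γ → AddSubgroup M
  internal : DirectSum.IsInternal gr
  smul_mem : ∀ {t e : γ} {r : A} {m : M}, hom t r → m ∈ gr e → r • m ∈ gr (t + e)

/-- A minimal graded free resolution `F : 0 ← M ← F₀ ← F₁ ← ⋯` of the graded `A`-module `M`.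
`β i` is a (finite) homogeneous basis of `Fᵢ = β i →₀ A`, with degrees `degB`.
The differential `d` and augmentation `aug` are homogeneous, the complex is exact,
and minimality `d(Fᵢ) ⊆ m·Fᵢ₋₁` holds (all matrix entries lie in `mA`). -/
structure MinFreeRes {A : Type} [CommRing A] (mA : Ideal A) {γ : Type} [AddCommGroup γ]
    [DecidableEq γ] (hom : γ → A → Prop) (M : Type) [AddCommGroup M] [Module A M]
    (gM : GrModStr hom M) where
  β : ℕ → Type
  finb : ∀ i, Fintype (β i)
  degB : ∀ i, β i → γ
  d : ∀ i, (β (i+1) →₀ A) →ₗ[A] (β i →₀ A)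
  aug : (β 0 →₀ A) →ₗ[A] M
  aug_surj : Function.Surjective aug
  exact0 : LinearMap.ker aug = LinearMap.range (d 0)
  exact : ∀ i, LinearMap.ker (d i) = LinearMap.range (d (i+1))
  homog : ∀ i (b : β (i+1)) (c : β i), hom (degB (i+1) b - degB i c) (d i (Finsupp.single b 1) c)
  minimal : ∀ i (b : β (i+1)) (c : β i), d i (Finsupp.single b 1) c ∈ mA
  aug_hom : ∀ (t : γ) (g : β 0 →₀ A), (∀ c, hom (t - degB 0 c) (g c)) → aug g ∈ gM.gr t

namespace MinFreeRes

variable {A : Type} [CommRing A] {mA : Ideal A} {γ : Type} [AddCommGroup γ] [DecidableEq γ]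
  {hom : γ → A → Prop} {M : Type} [AddCommGroup M] [Module A M] {gM : GrModStr hom M}
  (res : MinFreeRes mA hom M gM)

/-- The matrix entry of the differential between basis elements `b` and `c`. -/
def ent (i : ℕ) (b : res.β (i+1)) (c : res.β i) : A := res.d i (Finsupp.single b 1) c

/-- `g ∈ Fᵢ` is homogeneous of (internal) degree `t`. -/
def IsHomogF (i : ℕ) (t : γ) (g : res.β i →₀ A) : Prop := ∀ c, hom (t - res.degB i c) (g c)

open Classical in
/-- The entries of the linear part of the differential: all entries lying in `m²` are deleted. -/
def linent (i : ℕ) (b : res.β (i+1)) (c : res.β i) : A :=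
  if res.ent i b c ∈ mA ^ 2 then 0 else res.ent i b c

/-- The row of the linear part of the differential corresponding to a basis element `b`. -/
def linrow (i : ℕ) (b : res.β (i+1)) : res.β i →₀ A :=
  letI := res.finb i
  Finsupp.equivFunOnFinite.symm fun c => res.linent i b c

/-- The differential of the linear part `F^lin` of the resolution. -/
def dlin (i : ℕ) : (res.β (i+1) →₀ A) →ₗ[A] (res.β i →₀ A) :=
  Finsupp.linearCombination A (fun b => res.linrow i b)

/-- The submodule `mᵉ · Fᵢ`. -/
def mF (ℓ i : ℕ) : Submodule A (res.β i →₀ A) := (mA ^ ℓ) • (⊤ : Submodule A (res.β i →₀ A))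

/-- Nonvanishing of the `i`-th homology of the linear part `F^lin`. -/
def HlinNZ : ℕ → Prop
  | 0 => LinearMap.range (res.dlin 0) ≠ ⊤
  | i+1 => ¬ LinearMap.ker (res.dlin i) ≤ LinearMap.range (res.dlin (i+1))

/-- The complex `F ⊗ A/mᵉ`, concretely `Fᵢ/mᵉFᵢ`. -/
abbrev Cq (ℓ i : ℕ) := (res.β i →₀ A) ⧸ res.mF ℓ i

/-- The differential of `F ⊗ A/mᵉ`. -/
def dq (ℓ i : ℕ) : res.Cq ℓ (i+1) →ₗ[A] res.Cq ℓ i :=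
  Submodule.mapQ _ _ (res.d i) (by
    rw [← Submodule.map_le_iff_le_comap]
    calc Submodule.map (res.d i) (res.mF ℓ (i+1))
        = (mA ^ ℓ) • Submodule.map (res.d i) ⊤ := Submodule.map_smul'' _ _ _
      _ ≤ res.mF ℓ i := smul_mono_right _ le_top)

/-- The comparison map `F ⊗ A/m² → F ⊗ A/m` induced by the projection `A/m² → A/m`. -/
def qq (i : ℕ) : res.Cq 2 i →ₗ[A] res.Cq 1 i :=
  Submodule.mapQ _ _ LinearMap.id (by
    rw [← Submodule.map_le_iff_le_comap, Submodule.map_id]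
    exact Submodule.smul_mono_left (Ideal.pow_le_pow_right one_le_two))

lemma qq_dq (i : ℕ) : (res.qq i).comp (res.dq 2 i) = (res.dq 1 i).comp (res.qq (i+1)) := by
  apply Submodule.linearMap_qext
  apply LinearMap.ext
  intro x
  simp [dq, qq, Submodule.mapQ_apply]

/-- Tor₀ of `M` with `A/mᵉ`, computed from the resolution. -/
abbrev Tor0 (ℓ : ℕ) := (res.Cq ℓ 0) ⧸ LinearMap.range (res.dq ℓ 0)

/-- Cycles of `F ⊗ A/mᵉ` in homological degree `l+1`. -/
abbrev Zc (ℓ l : ℕ) : Submodule A (res.Cq ℓ (l+1)) := LinearMap.ker (res.dq ℓ l)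

/-- Boundaries, as a submodule of the cycles. -/
abbrev Bc (ℓ l : ℕ) : Submodule A ↥(res.Zc ℓ l) :=
  Submodule.comap (res.Zc ℓ l).subtype (LinearMap.range (res.dq ℓ (l+1)))

/-- `Tor_{l+1}(M, A/mᵉ)` computed from the resolution. -/
abbrev TorS (ℓ l : ℕ) := ↥(res.Zc ℓ l) ⧸ res.Bc ℓ l

/-- `qq` restricted to cycles. -/
def qqZ (l : ℕ) : ↥(res.Zc 2 l) →ₗ[A] ↥(res.Zc 1 l) :=
  (res.qq (l+1)).restrict (p := res.Zc 2 l) (q := res.Zc 1 l) (by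
    intro x hx
    have h := LinearMap.ext_iff.mp (res.qq_dq l) x
    simp only [LinearMap.comp_apply] at h
    simp only [Zc, LinearMap.mem_ker] at hx ⊢
    rw [← h, hx, map_zero])

/-- The map `ν^1_{l+1}(M) : Tor_{l+1}(M, A/m²) → Tor_{l+1}(M, A/m)`. -/
def nuS (l : ℕ) : res.TorS 2 l →ₗ[A] res.TorS 1 l :=
  Submodule.mapQ _ _ (res.qqZ l) (by
    rintro ⟨x, hx⟩ hb
    simp only [Bc, Submodule.mem_comap, Submodule.subtype_apply, LinearMap.mem_range] at hb ⊢
    obtain ⟨y, hy⟩ := hb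
    refine ⟨res.qq (l+2) y, ?_⟩
    have h := LinearMap.ext_iff.mp (res.qq_dq (l+1)) y
    simp only [LinearMap.comp_apply] at h
    show res.dq 1 (l+1) (res.qq (l+2) y) = (res.qqZ l ⟨x, hx⟩ : res.Cq 1 (l+1))
    rw [← h, hy]
    rfl)

/-- The map `ν^1_0(M) : Tor₀(M, A/m²) → Tor₀(M, A/m)`. -/
def nu0 : res.Tor0 2 →ₗ[A] res.Tor0 1 :=
  Submodule.mapQ _ _ (res.qq 0) (by
    rintro x hx
    simp only [LinearMap.mem_range, Submodule.mem_comap] at hx ⊢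
    obtain ⟨y, hy⟩ := hx
    refine ⟨res.qq 1 y, ?_⟩
    have h := LinearMap.ext_iff.mp (res.qq_dq 0) y
    simp only [LinearMap.comp_apply] at h
    rw [← h, hy])

/-- Nonvanishing of `ν_i^1(M)`. -/
def nuNZ : ℕ → Prop
  | 0 => res.nu0 ≠ 0
  | l+1 => res.nuS l ≠ 0

end MinFreeRes

section ZGraded

variable {A : Type} [CommRing A] {mA : Ideal A}
  {hom : ℤ → A → Prop} {M : Type} [AddCommGroup M] [Module A M] {gM : GrModStr hom M}
  (res : MinFreeRes mA hom M gM)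

namespace MinFreeRes

/-- The strand filtration `F^{≤k}`: the subcomplex of `F` generated by all homogeneous
elements `a` with `‖a‖ = deg a - i ≤ k`. -/
def Fle (kk : ℤ) (i : ℕ) : Submodule A (res.β i →₀ A) :=
  Submodule.span A {g | ∃ t : ℤ, res.IsHomogF i t g ∧ t - i ≤ kk}

/-- `|a|_F = min {k : a ∈ F^{≤k}}`. -/
def degF {i : ℕ} (a : res.β i →₀ A) : ℤ := sInf {kk : ℤ | a ∈ res.Fle kk i}

/-- `|a|_m = max {ℓ : a ∈ mᵉF}`. -/
def degm {i : ℕ} (a : res.β i →₀ A) : ℕ := sSup {ℓ : ℕ | a ∈ res.mF ℓ i}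

/-- The `k`-linear strand of `F^lin`: the subcomplex spanned by the basis elements `b`
with `‖b‖ = deg b - i = k`. -/
def strand (kk : ℤ) (i : ℕ) : Submodule A (res.β i →₀ A) :=
  Submodule.span A {g | ∃ b : res.β i, res.degB i b - i = kk ∧ g = Finsupp.single b 1}

/-- Vanishing of the homology of the subcomplex `F^{≤k}` in homological degree `j`. -/
def HleZero (kk : ℤ) : ℕ → Prop
  | 0 => res.Fle kk 0 ≤ Submodule.map (res.d 0) (res.Fle kk 1)
  | j+1 => LinearMap.ker (res.d j) ⊓ res.Fle kk (j+1) ≤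
      Submodule.map (res.d (j+1)) (res.Fle kk (j+2))

end MinFreeRes

/-- The submodule `M_{⟨k⟩}` of `M` generated by the homogeneous elements of degree `k`. -/
def degPartMod (gM : GrModStr hom M) (k₀ : ℤ) : Submodule A M :=
  Submodule.span A (gM.gr k₀ : Set M)

/-- A graded module `(N, gN)` has a `k₀`-linear (minimal free) resolution. -/
def HasLinRes (N : Type) [AddCommGroup N] [Module A N] (gN : GrModStr hom N) (k₀ : ℤ) : Prop :=
  ∃ res : MinFreeRes mA hom N gN, ∀ i (b : res.β i), res.degB i b = k₀ + i

/-- `M` is componentwise linear: for every `k₀`, the submodule `M_{⟨k₀⟩}` (with its induced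
grading) has a `k₀`-linear resolution. -/
def CompLinear (mA : Ideal A) (gM : GrModStr hom M) : Prop :=
  ∀ k₀ : ℤ, ∃ gN : GrModStr hom ↥(degPartMod gM k₀),
    (∀ (t : ℤ) (x : ↥(degPartMod gM k₀)), x ∈ gN.gr t ↔ (x : M) ∈ gM.gr t) ∧
    HasLinRes (mA := mA) ↥(degPartMod gM k₀) gN k₀

end ZGraded


/-- A multiplicative structure on a resolution `F` of `A/I`: a homogeneous collection of
`A`-bilinear maps `F_i × F_j → F_{i+j}` lifting the multiplication of `A/I` and satisfying
the Leibniz rule (i.e. a chain map `F ⊗ F → F` lifting the identity). -/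
structure MultStr {A : Type} [CommRing A] {mA : Ideal A} {γ : Type} [AddCommGroup γ]
    [DecidableEq γ] {hom : γ → A → Prop} {I : Ideal A} {gQ : GrModStr hom (A ⧸ I)}
    (res : MinFreeRes mA hom (A ⧸ I) gQ) where
  mul : ∀ (i j l : ℕ), i + j = l →
    (res.β i →₀ A) →ₗ[A] ((res.β j →₀ A) →ₗ[A] (res.β l →₀ A))
  lift_mul : ∀ (a b : res.β 0 →₀ A),
    res.aug (mul 0 0 0 rfl a b) = res.aug a * res.aug b
  hom_mul : ∀ (i j l : ℕ) (h : i + j = l) (t s : γ) (a : res.β i →₀ A) (b : res.β j →₀ A),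
    res.IsHomogF i t a → res.IsHomogF j s b → res.IsHomogF l (t + s) (mul i j l h a b)
  leibniz_left : ∀ (i : ℕ) (a : res.β (i+1) →₀ A) (b : res.β 0 →₀ A),
    res.d i (mul (i+1) 0 (i+1) rfl a b) = mul i 0 i rfl (res.d i a) b
  leibniz_right : ∀ (j : ℕ) (a : res.β 0 →₀ A) (b : res.β (j+1) →₀ A),
    res.d j (mul 0 (j+1) (j+1) (by omega) a b) = mul 0 j j (by omega) a (res.d j b)
  leibniz : ∀ (i j : ℕ) (a : res.β (i+1) →₀ A) (b : res.β (j+1) →₀ A),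
    res.d (i+j+1) (mul (i+1) (j+1) (i+j+2) (by omega) a b) =
      mul i (j+1) (i+j+1) (by omega) (res.d i a) b +
      ((-1 : ℤ) ^ (i+1)) • mul (i+1) j (i+j+1) (by omega) a (res.d j b)

/-- The class in `Tor_l(M, A/m)` of a chain `x ∈ F_l` lies in the image of
`ν_l^1(M) : Tor_l(M, A/m²) → Tor_l(M, A/m)`. -/
def MinFreeRes.classInNuRange {A : Type} [CommRing A] {mA : Ideal A} {γ : Type}
    [AddCommGroup γ] [DecidableEq γ] {hom : γ → A → Prop} {M : Type} [AddCommGroup M]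
    [Module A M] {gM : GrModStr hom M} (res : MinFreeRes mA hom M gM) :
    ∀ (l : ℕ), (res.β l →₀ A) → Prop
  | 0, x => ∃ y : res.Tor0 2,
      res.nu0 y = Submodule.Quotient.mk ((Submodule.Quotient.mk x : res.Cq 1 0))
  | l+1, x => ∃ (hz : (Submodule.Quotient.mk x : res.Cq 1 (l+1)) ∈ res.Zc 1 l)
      (y : res.TorS 2 l),
      res.nuS l y = Submodule.Quotient.mk (⟨Submodule.Quotient.mk x, hz⟩ : ↥(res.Zc 1 l))

/-!
By the Leibniz rule, `d(a·b) = d(a)·b ± a·d(b)`. Minimality puts every coordinate of `d(a)`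
and `d(b)` in `m`, while each product of `a` or `b` with a basis vector has total homological
degree below `i₁ + i₂`, hence lies in `m F` by the vanishing hypothesis. So `d(a·b) ∈ m² F`:
`a·b` is already a cycle of `F ⊗ S/m²`, and its class there maps to the class of `a·b` in
`F ⊗ S/m`.
-/

lemma polyHom_one (k : Type) [Field k] (n : ℕ) : polyHom k n 0 (1 : PolyS k n) := by
  simpa [polyHom] using MvPolynomial.isHomogeneous_one (Fin n) k

lemma polyHom_zero (k : Type) [Field k] (n : ℕ) (t : ℤ) : polyHom k n t (0 : PolyS k n) := by
  unfold polyHom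
  split_ifs
  · exact MvPolynomial.isHomogeneous_zero _ _ _
  · rfl

namespace MinFreeRes

variable {A : Type} [CommRing A] {mA : Ideal A} {γ : Type} [AddCommGroup γ] [DecidableEq γ]
  {hom : γ → A → Prop} {M : Type} [AddCommGroup M] [Module A M] {gM : GrModStr hom M}
  (res : MinFreeRes mA hom M gM)

lemma isHomogF_single (hone : hom 0 1) (hzero : ∀ t, hom t 0) (i : ℕ) (c : res.β i) :
    res.IsHomogF i (res.degB i c) (Finsupp.single c 1) := by
  intro c'
  by_cases h : c = c'
  · subst h
    rw [Finsupp.single_eq_same, sub_self]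
    exact hone
  · rw [Finsupp.single_eq_of_ne' h]
    exact hzero _

lemma d_apply_mem (i : ℕ) (x : res.β (i+1) →₀ A) (c : res.β i) : res.d i x c ∈ mA := by
  induction x using Finsupp.induction_linear with
  | zero => simp
  | add f g hf hg => rw [map_add, Finsupp.add_apply]; exact add_mem hf hg
  | single b r =>
    rw [← mul_one r, ← smul_eq_mul, ← Finsupp.smul_single, map_smul, Finsupp.smul_apply]
    exact Ideal.mul_mem_left _ _ (res.minimal i b c)

lemma mF_two_eq_smul_mF_one (l : ℕ) : res.mF 2 l = mA • res.mF 1 l := by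
  rw [mF, mF, pow_one, pow_two, ← Ideal.smul_eq_mul, Submodule.smul_assoc]

lemma map_mem_mF_two {i l : ℕ} (f : (res.β i →₀ A) →ₗ[A] (res.β l →₀ A))
    (hf : ∀ c, f (Finsupp.single c 1) ∈ res.mF 1 l) (x : res.β i →₀ A) (hx : ∀ c, x c ∈ mA) :
    f x ∈ res.mF 2 l := by
  rw [← Finsupp.sum_single x, map_finsuppSum]
  refine Submodule.sum_mem _ fun c _ => ?_
  show f (Finsupp.single c (x c)) ∈ _
  rw [← mul_one (x c), ← smul_eq_mul, ← Finsupp.smul_single, map_smul,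
    res.mF_two_eq_smul_mF_one]
  exact Submodule.smul_mem_smul (hx c) (hf c)

lemma map_d_mem_mF_two {i l : ℕ} (f : (res.β i →₀ A) →ₗ[A] (res.β l →₀ A))
    (hf : ∀ c, f (Finsupp.single c 1) ∈ res.mF 1 l) (x : res.β (i+1) →₀ A) :
    f (res.d i x) ∈ res.mF 2 l :=
  res.map_mem_mF_two f hf _ (res.d_apply_mem i x)

lemma classInNuRange_zero (x : res.β 0 →₀ A) : res.classInNuRange 0 x :=
  ⟨Submodule.Quotient.mk (Submodule.Quotient.mk x), rfl⟩

lemma classInNuRange_succ_of_d_mem (l : ℕ) (z : res.β (l+1) →₀ A)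
    (hdz : res.d l z ∈ res.mF 2 l) : res.classInNuRange (l+1) z := by
  have hz2 : (Submodule.Quotient.mk z : res.Cq 2 (l+1)) ∈ res.Zc 2 l :=
    (Submodule.Quotient.mk_eq_zero _).mpr hdz
  have hz1 : (Submodule.Quotient.mk z : res.Cq 1 (l+1)) ∈ res.Zc 1 l :=
    (Submodule.Quotient.mk_eq_zero _).mpr
      (Submodule.smul_mono_left (Ideal.pow_le_pow_right one_le_two) hdz)
  exact ⟨hz1, Submodule.Quotient.mk ⟨_, hz2⟩, rfl⟩

end MinFreeRes

namespace MultStr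

variable {A : Type} [CommRing A] {mA : Ideal A} {γ : Type} [AddCommGroup γ] [DecidableEq γ]
  {hom : γ → A → Prop} {I : Ideal A} {gQ : GrModStr hom (A ⧸ I)}
  {res : MinFreeRes mA hom (A ⧸ I) gQ} (ms : MultStr res)

theorem classInNuRange_mul (hone : hom 0 1) (hzero : ∀ t, hom t 0) {i₁ i₂ l : ℕ}
    (hl : i₁ + i₂ = l) {t₁ t₂ : γ} {a : res.β i₁ →₀ A} {b : res.β i₂ →₀ A}
    (ha : res.IsHomogF i₁ t₁ a) (hb : res.IsHomogF i₂ t₂ b)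
    (hlow : ∀ (j₁ j₂ m : ℕ) (hm : j₁ + j₂ = m), m < l →
      ∀ (s₁ s₂ : γ) (x : res.β j₁ →₀ A) (y : res.β j₂ →₀ A),
        res.IsHomogF j₁ s₁ x → res.IsHomogF j₂ s₂ y → ms.mul j₁ j₂ m hm x y ∈ res.mF 1 m) :
    res.classInNuRange l (ms.mul i₁ i₂ l hl a b) := by
  have mul_single {j₂ m : ℕ} (hm : i₁ + j₂ = m) (hlt : m < l) (c : res.β j₂) :
      ms.mul i₁ j₂ m hm a (Finsupp.single c 1) ∈ res.mF 1 m :=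
    hlow _ _ _ hm hlt _ _ _ _ ha (res.isHomogF_single hone hzero j₂ c)
  have single_mul {j₁ m : ℕ} (hm : j₁ + i₂ = m) (hlt : m < l) (c : res.β j₁) :
      ms.mul j₁ i₂ m hm (Finsupp.single c 1) b ∈ res.mF 1 m :=
    hlow _ _ _ hm hlt _ _ _ _ (res.isHomogF_single hone hzero j₁ c) hb
  rcases i₁ with _ | i <;> rcases i₂ with _ | j
  · obtain rfl : l = 0 := by omega
    exact res.classInNuRange_zero _
  · obtain rfl : l = j + 1 := by omega
    refine res.classInNuRange_succ_of_d_mem j _ ?_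
    rw [ms.leibniz_right j a b]
    exact res.map_d_mem_mF_two _ (mul_single (by omega) (by omega)) b
  · obtain rfl : l = i + 1 := by omega
    refine res.classInNuRange_succ_of_d_mem i _ ?_
    rw [ms.leibniz_left i a b]
    exact res.map_d_mem_mF_two ((ms.mul i 0 i rfl).flip b) (single_mul _ (by omega)) a
  · obtain rfl : l = i + j + 2 := by omega
    refine res.classInNuRange_succ_of_d_mem (i+j+1) _ ?_
    rw [ms.leibniz i j a b]
    refine add_mem ?_ (Submodule.smul_of_tower_mem _ _ ?_)
    · exact res.map_d_mem_mF_two ((ms.mul i (j+1) (i+j+1) (by omega)).flip b)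
        (single_mul _ (by omega)) a
    · exact res.map_d_mem_mF_two _ (mul_single (by omega) (by omega)) b

end MultStr

theorem product_in_nu_image_general {k : Type} [Field k] {n : ℕ}
    (I : Ideal (PolyS k n))
    (gQ : GrModStr (polyHom k n) (PolyS k n ⧸ I))
    (res : MinFreeRes (mIdl k n) (polyHom k n) (PolyS k n ⧸ I) gQ)
    (ms : MultStr res) (i₁ i₂ : ℕ) (t₁ t₂ : ℤ)
    (a : res.β i₁ →₀ PolyS k n) (b : res.β i₂ →₀ PolyS k n)
    (hta : res.IsHomogF i₁ t₁ a) (htb : res.IsHomogF i₂ t₂ b)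
    (hmin : ∀ (j₁ j₂ : ℕ), j₁ + j₂ < i₁ + i₂ →
      ∀ (s₁ s₂ : ℤ) (x : res.β j₁ →₀ PolyS k n) (y : res.β j₂ →₀ PolyS k n),
        res.IsHomogF j₁ s₁ x → res.IsHomogF j₂ s₂ y →
          ms.mul j₁ j₂ (j₁+j₂) rfl x y ∈ res.mF 1 (j₁+j₂)) :
    res.classInNuRange (i₁+i₂) (ms.mul i₁ i₂ (i₁+i₂) rfl a b) :=
  ms.classInNuRange_mul (polyHom_one k n) (polyHom_zero k n) rfl hta htb
    fun j₁ j₂ _ hm => by subst hm; exact hmin j₁ j₂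

/-- Let `I ⊆ S` be a homogeneous ideal and `F` a minimal free resolution
of `S/I` with a multiplicative structure.  If `a, b` are homogeneous elements of
`Tor^S(S/I, 𝕜)` of homological degrees `i₁, i₂` with `a·b ≠ 0` and all products of total
homological degree `< i₁ + i₂` vanish, then `a·b` lies in the image of `ν¹_{i₁+i₂}(S/I)`. -/
theorem product_in_nu_image {k : Type} [Field k] {n : ℕ}
    (I : Ideal (PolyS k n)) (hI : IdealIsHomog I)
    (gQ : GrModStr (polyHom k n) (PolyS k n ⧸ I))
    (hgQ : ∀ (t : ℤ) (x : PolyS k n ⧸ I), x ∈ gQ.gr t ↔ quotHom k n I t x)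
    (res : MinFreeRes (mIdl k n) (polyHom k n) (PolyS k n ⧸ I) gQ)
    (ms : MultStr res) (i₁ i₂ : ℕ) (t₁ t₂ : ℤ)
    (a : res.β i₁ →₀ PolyS k n) (b : res.β i₂ →₀ PolyS k n)
    (hta : res.IsHomogF i₁ t₁ a) (htb : res.IsHomogF i₂ t₂ b)
    (hab : ms.mul i₁ i₂ (i₁+i₂) rfl a b ∉ res.mF 1 (i₁+i₂))
    (hmin : ∀ (j₁ j₂ : ℕ), j₁ + j₂ < i₁ + i₂ →
      ∀ (s₁ s₂ : ℤ) (x : res.β j₁ →₀ PolyS k n) (y : res.β j₂ →₀ PolyS k n),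
        res.IsHomogF j₁ s₁ x → res.IsHomogF j₂ s₂ y →
          ms.mul j₁ j₂ (j₁+j₂) rfl x y ∈ res.mF 1 (j₁+j₂)) :
    res.classInNuRange (i₁+i₂) (ms.mul i₁ i₂ (i₁+i₂) rfl a b) :=
  product_in_nu_image_general I gQ res ms i₁ i₂ t₁ t₂ a b hta htb hmin
end LinMaps
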